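/- arXiv:2503.22867 — 3 statements merged into one kernel-verified Lean document; each statement's English description precedes it below -/
import Mathlib

section
/- Under Assumption 1 (d_θ(s) > 0 for all s ∈ S and all θ ∈ X), every first-order stationary policy of a finite Markov game under direct policy parameterization is a Nash equilibrium: if θ* ∈ X satisfies (θ_i' − θ_i*)ᵀ ∇_{θ_i} J_i(θ*) ≤ 0 for every θ_i' ∈ X_i and every agent i, then J_i(θ_i*, θ_{-i}*) ≥ J_i(θ_i', θ_{-i}*) for every θ_i' ∈ X_i and every agent i. -/
open scoped BigOperators

/-! Common framework for finite Markov games under direct policy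
parameterization.  Agents are indexed by `Fin N`, the state space `S` and the
action spaces `A i` are finite.  A policy profile is `θ : ∀ i, S → A i → ℝ`,
feasible when each `θ i s` lies in the probability simplex. -/

section MGDefs

variable {N : ℕ} {S : Type} {A : Fin N → Type}
variable [Fintype S] [∀ i, Fintype (A i)]

/-- Joint policy `π_θ(a|s) = ∏ i, θ_i(a_i|s)` induced by the per-agent
directly parameterized policies. -/
def jointPi (θ : ∀ i, S → A i → ℝ) : S → (∀ i, A i) → ℝ :=
  fun s a => ∏ i, θ i s (a i)

/-- Distribution of the state at time `t` under transition kernel `P`,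
policy `π` and initial distribution `ρ`. -/
def stateDist {σ α : Type} [Fintype σ] [Fintype α] (P : σ → α → σ → ℝ)
    (π : σ → α → ℝ) (ρ : σ → ℝ) : ℕ → σ → ℝ
  | 0 => ρ
  | t + 1 => fun s' => ∑ s, ∑ a, stateDist P π ρ t s * π s a * P s a s'

/-- Expected discounted sum `E[∑ₜ γ^t f(s_t, a_t)]` of a state-action
function `f`, under kernel `P`, policy `π`, and initial distribution `ρ`. -/
noncomputable def expDisc {σ α : Type} [Fintype σ] [Fintype α] (γ : ℝ)
    (P : σ → α → σ → ℝ) (π : σ → α → ℝ) (ρ : σ → ℝ) (f : σ → α → ℝ) : ℝ :=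
  ∑' t : ℕ, γ ^ t * ∑ s, ∑ a, stateDist P π ρ t s * π s a * f s a

/-- Dirac (point-mass) distribution at `s`. -/
def dirac {σ : Type} [DecidableEq σ] (s : σ) : σ → ℝ :=
  fun s' => if s' = s then 1 else 0

/-- Value function `V^θ(s) = E[∑ₜ γ^t f(s_t,a_t) | π_θ, s_0 = s]`. -/
noncomputable def valueV [DecidableEq S] (γ : ℝ) (P : S → (∀ i, A i) → S → ℝ)
    (θ : ∀ i, S → A i → ℝ) (f : S → (∀ i, A i) → ℝ) (s : S) : ℝ :=
  expDisc γ P (jointPi θ) (dirac s) f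

/-- Total objective `J(θ) = E_{s₀ ∼ ρ}[∑ₜ γ^t f(s_t,a_t) | π_θ]`. -/
noncomputable def Jtot (γ : ℝ) (P : S → (∀ i, A i) → S → ℝ) (ρ : S → ℝ)
    (θ : ∀ i, S → A i → ℝ) (f : S → (∀ i, A i) → ℝ) : ℝ :=
  expDisc γ P (jointPi θ) ρ f

/-- The feasible set `X = X_1 × ⋯ × X_N`, `X_i = Δ(A_i)^S`. -/
def feasible (θ : ∀ i, S → A i → ℝ) : Prop :=
  ∀ i, ∀ s, θ i s ∈ stdSimplex ℝ (A i)

/-- Discounted state-visitation measure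
`d_θ(s) = (1-γ) E_{s₀∼ρ} ∑ₜ γ^t Pr^θ(s_t = s | s₀)`. -/
noncomputable def visit (γ : ℝ) (P : S → (∀ i, A i) → S → ℝ)
    (θ : ∀ i, S → A i → ℝ) (ρ : S → ℝ) (s : S) : ℝ :=
  (1 - γ) * ∑' t : ℕ, γ ^ t * stateDist P (jointPi θ) ρ t s

end MGDefs

/-! Fixing agent `i` and the other agents' policies, agent `i` faces a single-agent MDP whose
kernel and reward are averaged over the others' actions, and `J_i` is the objective of that MDP.
For a single agent, `J(π) = ρ ⬝ (I - γ M_π)⁻¹ R_π`. Its derivative in a direction `u` is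
`∑ₛ d_π(s) ∑ₐ u(s,a) Q_π(s,a)` with the occupancy `d_π = ρ (I - γ M_π)⁻¹`, and the performance
difference lemma reads `J(π') - J(π) = ∑ₛ d_{π'}(s) ∑ₐ (π' - π)(s,a) Q_π(s,a)`. Testing
stationarity against a deviation to a pure action `b` at a single state `s` and dividing by
`d_π(s) > 0` gives `Q_π(s,b) ≤ V_π(s)`, so every term of the performance difference is `≤ 0`. -/

namespace MDP

open Matrix

section

variable {σ α : Type} [Fintype σ] [Fintype α]

def transMat (P : σ → α → σ → ℝ) : (σ → α → ℝ) →ₗ[ℝ] Matrix σ σ ℝ where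
  toFun π := Matrix.of fun s s' => ∑ a, π s a * P s a s'
  map_add' π π' := by ext; simp [add_mul, Finset.sum_add_distrib]
  map_smul' c π := by ext; simp [Finset.mul_sum, mul_assoc]

def rewardVec (f : σ → α → ℝ) : (σ → α → ℝ) →ₗ[ℝ] (σ → ℝ) where
  toFun π s := ∑ a, π s a * f s a
  map_add' π π' := by ext; simp [add_mul, Finset.sum_add_distrib]
  map_smul' c π := by ext; simp [Finset.mul_sum, mul_assoc]

def qValue (γ : ℝ) (P : σ → α → σ → ℝ) (f : σ → α → ℝ) (v : σ → ℝ) : σ → α → ℝ :=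
  fun s a => f s a + γ * ∑ s', P s a s' * v s'

variable {γ : ℝ} {P : σ → α → σ → ℝ} {f : σ → α → ℝ} {ρ : σ → ℝ} {π π' : σ → α → ℝ}

lemma rewardVec_add_smul_transMat_mulVec (γ : ℝ) (u : σ → α → ℝ) (v : σ → ℝ) :
    rewardVec f u + γ • (transMat P u *ᵥ v) = fun s => ∑ a, u s a * qValue γ P f v s a := by
  ext s
  simp only [rewardVec, transMat, qValue, LinearMap.coe_mk, AddHom.coe_mk, Pi.add_apply,
    Pi.smul_apply, smul_eq_mul, mulVec, dotProduct, of_apply, mul_add, Finset.sum_add_distrib,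
    Finset.mul_sum, Finset.sum_mul]
  rw [Finset.sum_comm]
  congr 1
  exact Finset.sum_congr rfl fun a _ => Finset.sum_congr rfl fun s' _ => by ring

lemma stateDist_nonneg (hP : ∀ s a s', 0 ≤ P s a s') (hπ : ∀ s a, 0 ≤ π s a)
    (hρ : ∀ s, 0 ≤ ρ s) (t : ℕ) (s : σ) : 0 ≤ stateDist P π ρ t s := by
  induction t generalizing s with
  | zero => exact hρ s
  | succ t ih =>
    exact Finset.sum_nonneg fun s _ => Finset.sum_nonneg fun a _ =>
      mul_nonneg (mul_nonneg (ih s) (hπ s a)) (hP s a _)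

variable [DecidableEq σ]

noncomputable def resolvent (γ : ℝ) (P : σ → α → σ → ℝ) (π : σ → α → ℝ) : Matrix σ σ ℝ :=
  Ring.inverse (1 - γ • transMat P π)

noncomputable def value (γ : ℝ) (P : σ → α → σ → ℝ) (f : σ → α → ℝ) (π : σ → α → ℝ) : σ → ℝ :=
  resolvent γ P π *ᵥ rewardVec f π

lemma stateDist_eq_vecMul_pow (P : σ → α → σ → ℝ) (π : σ → α → ℝ) (ρ : σ → ℝ) (t : ℕ) :
    stateDist P π ρ t = ρ ᵥ* transMat P π ^ t := by
  induction t with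
  | zero => simp [stateDist]
  | succ t ih =>
    ext s'
    rw [pow_succ, ← vecMul_vecMul, ← ih]
    simp only [stateDist, vecMul, dotProduct, transMat, LinearMap.coe_mk, AddHom.coe_mk, of_apply,
      Finset.mul_sum, mul_assoc]

section Norm

/- The ℓ∞ operator norm, under which a stochastic matrix has norm `≤ 1`. The hypotheses
`‖γ • transMat P π‖ < 1` make `1 - γ • transMat P π` a unit, so that `resolvent` is a genuine
inverse rather than the junk value of `Ring.inverse`. -/
attribute [local instance] Matrix.linftyOpNormedAddCommGroup Matrix.linftyOpNormedRing
  Matrix.linftyOpNormedAlgebra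

lemma norm_smul_transMat_lt_one (hγ0 : 0 ≤ γ) (hγ1 : γ < 1)
    (hP : ∀ s a, P s a ∈ stdSimplex ℝ σ) (hπ : ∀ s, π s ∈ stdSimplex ℝ α) :
    ‖γ • transMat P π‖ < 1 := by
  have hrow (s : σ) : ∑ s', ‖transMat P π s s'‖₊ = 1 := by
    rw [← NNReal.coe_inj]
    push_cast [coe_nnnorm]
    calc ∑ s', ‖transMat P π s s'‖ = ∑ s', ∑ a, π s a * P s a s' :=
          Finset.sum_congr rfl fun s' _ => Real.norm_of_nonneg <|
            Finset.sum_nonneg fun a _ => mul_nonneg ((hπ s).1 a) ((hP s a).1 s')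
      _ = ∑ a, π s a * ∑ s', P s a s' := by rw [Finset.sum_comm]; simp only [Finset.mul_sum]
      _ = 1 := by simp [(hP s _).2, (hπ s).2]
  have hM : ‖transMat P π‖ ≤ 1 := by
    rw [linfty_opNorm_def]
    exact_mod_cast Finset.sup_le fun s _ => (hrow s).le
  calc ‖γ • transMat P π‖ ≤ γ * 1 := by
        rw [norm_smul, Real.norm_of_nonneg hγ0]; gcongr
    _ < 1 := by linarith

variable (ρ) in
lemma hasSum_discounted_stateDist_dotProduct (h : ‖γ • transMat P π‖ < 1) (v : σ → ℝ) :
    HasSum (fun t => γ ^ t * (stateDist P π ρ t ⬝ᵥ v)) (ρ ⬝ᵥ resolvent γ P π *ᵥ v) := by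
  let evalL : Matrix σ σ ℝ →L[ℝ] ℝ :=
    LinearMap.toContinuousLinearMap (dotProductBilin ℝ ℝ ρ ∘ₗ (mulVecBilin ℝ ℝ).flip v)
  convert (hasSum_geom_series_inverse _ h).mapL evalL using 1
  · ext t
    simp [evalL, stateDist_eq_vecMul_pow, smul_pow, dotProduct_mulVec]
  · rfl

lemma expDisc_eq_dotProduct_value (h : ‖γ • transMat P π‖ < 1) :
    expDisc γ P π ρ f = ρ ⬝ᵥ value γ P f π := by
  rw [expDisc, value, ← (hasSum_discounted_stateDist_dotProduct ρ h _).tsum_eq]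
  refine tsum_congr fun t => ?_
  simp only [dotProduct, rewardVec, LinearMap.coe_mk, AddHom.coe_mk, Finset.mul_sum, mul_assoc]

lemma vecMul_resolvent_apply (h : ‖γ • transMat P π‖ < 1) (s : σ) :
    (ρ ᵥ* resolvent γ P π) s = ∑' t, γ ^ t * stateDist P π ρ t s := by
  classical
  have := (hasSum_discounted_stateDist_dotProduct ρ h (Pi.single s 1)).tsum_eq
  simp only [dotProduct_single, mul_one, dotProduct_mulVec] at this
  exact this.symm

lemma value_eq_rewardVec_add (h : ‖γ • transMat P π‖ < 1) :
    value γ P f π = rewardVec f π + γ • (transMat P π *ᵥ value γ P f π) := by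
  have hV : (1 - γ • transMat P π) *ᵥ value γ P f π = rewardVec f π := by
    rw [value, resolvent, mulVec_mulVec,
      Ring.mul_inverse_cancel _ (isUnit_one_sub_of_norm_lt_one h), one_mulVec]
  rw [← hV, sub_mulVec, one_mulVec, smul_mulVec, sub_add_cancel]

lemma expDisc_sub_expDisc (h : ‖γ • transMat P π‖ < 1) (h' : ‖γ • transMat P π'‖ < 1) :
    expDisc γ P π' ρ f - expDisc γ P π ρ f
      = ∑ s, (ρ ᵥ* resolvent γ P π') s * ∑ a, (π' - π) s a * qValue γ P f (value γ P f π) s a := by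
  set V := value γ P f π
  have hV : V = rewardVec f π + γ • (transMat P π *ᵥ V) := value_eq_rewardVec_add h
  have hdiff : value γ P f π' - V
      = resolvent γ P π' *ᵥ (rewardVec f (π' - π) + γ • (transMat P (π' - π) *ᵥ V)) := by
    calc value γ P f π' - V
        = resolvent γ P π' *ᵥ (rewardVec f π' - (1 - γ • transMat P π') *ᵥ V) := by
          rw [mulVec_sub, mulVec_mulVec, resolvent,
            Ring.inverse_mul_cancel _ (isUnit_one_sub_of_norm_lt_one h'), one_mulVec]
          rfl
      _ = _ := by
          congr 1
          rw [map_sub, map_sub, sub_mulVec, sub_mulVec, one_mulVec, smul_mulVec]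
          nth_rw 1 [hV]
          module
  rw [expDisc_eq_dotProduct_value h', expDisc_eq_dotProduct_value h, ← dotProduct_sub, hdiff,
    dotProduct_mulVec, rewardVec_add_smul_transMat_mulVec]
  rfl

lemma hasFDerivAt_resolvent (h : ‖γ • transMat P π‖ < 1) :
    HasFDerivAt (resolvent γ P)
      (γ • (ContinuousLinearMap.mulLeftRight ℝ _ (resolvent γ P π) (resolvent γ P π)).comp
        (LinearMap.toContinuousLinearMap (transMat P))) π := by
  let u := Units.oneSub _ h
  have hW : resolvent γ P π = ↑u⁻¹ := by rw [resolvent, ← Ring.inverse_unit]; rfl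
  have hK : HasFDerivAt (fun x => 1 - γ • transMat P x)
      (-(γ • LinearMap.toContinuousLinearMap (transMat P))) π :=
    (γ • LinearMap.toContinuousLinearMap (transMat P)).hasFDerivAt.const_sub 1
  refine ((hasFDerivAt_ringInverse (𝕜 := ℝ) u).comp π hK).congr_fderiv ?_
  ext x : 1
  rw [hW]
  change -(u⁻¹ * -(γ • transMat P x) * u⁻¹ : Matrix σ σ ℝ) = _
  simp

lemma fderiv_expDisc_apply (h : ‖γ • transMat P π‖ < 1) (u : σ → α → ℝ) :
    fderiv ℝ (fun x => expDisc γ P x ρ f) π u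
      = ∑ s, (ρ ᵥ* resolvent γ P π) s * ∑ a, u s a * qValue γ P f (value γ P f π) s a := by
  have hopen : IsOpen {x | ‖γ • transMat P x‖ < 1} :=
    isOpen_lt ((LinearMap.toContinuousLinearMap (transMat P)).continuous.const_smul γ).norm
      continuous_const
  have hloc : (fun x => expDisc γ P x ρ f) =ᶠ[nhds π] fun x => ρ ⬝ᵥ value γ P f x :=
    Filter.eventually_of_mem (hopen.mem_nhds h) fun x hx => expDisc_eq_dotProduct_value hx
  let B : Matrix σ σ ℝ →L[ℝ] (σ → ℝ) →L[ℝ] (σ → ℝ) := LinearMap.toContinuousLinearMap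
    (LinearMap.toContinuousLinearMap.toLinearMap ∘ₗ mulVecBilin ℝ ℝ)
  have hV : HasFDerivAt (fun x => ρ ⬝ᵥ value γ P f x) _ π :=
    (LinearMap.toContinuousLinearMap (dotProductBilin ℝ ℝ ρ)).hasFDerivAt.comp π
      (B.hasFDerivAt_of_bilinear (hasFDerivAt_resolvent h)
        (LinearMap.toContinuousLinearMap (rewardVec f)).hasFDerivAt)
  rw [hloc.fderiv_eq, hV.fderiv]
  change ρ ⬝ᵥ (resolvent γ P π *ᵥ rewardVec f u
    + (γ • (resolvent γ P π * transMat P u * resolvent γ P π)) *ᵥ rewardVec f π) = _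
  rw [smul_mulVec, ← mulVec_mulVec, ← mulVec_mulVec, ← value, ← mulVec_smul, ← mulVec_add,
    rewardVec_add_smul_transMat_mulVec, dotProduct_mulVec]
  rfl

lemma qValue_le_of_fderiv_nonpos (h : ‖γ • transMat P π‖ < 1)
    (hπ : ∀ s, π s ∈ stdSimplex ℝ α) (hvisit : ∀ s, 0 < (ρ ᵥ* resolvent γ P π) s)
    (hstat : ∀ π' : σ → α → ℝ, (∀ s, π' s ∈ stdSimplex ℝ α) →
      fderiv ℝ (fun x => expDisc γ P x ρ f) π (π' - π) ≤ 0) (s : σ) (b : α) :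
    qValue γ P f (value γ P f π) s b ≤ ∑ a, π s a * qValue γ P f (value γ P f π) s a := by
  classical
  have hfeas : ∀ s', Function.update π s (Pi.single b 1) s' ∈ stdSimplex ℝ α := by
    intro s'
    by_cases hs : s' = s
    · subst hs; simpa using single_mem_stdSimplex ℝ b
    · simpa [hs] using hπ s'
  have hdev : Function.update π s (Pi.single b 1) - π = Pi.single s (Pi.single b 1 - π s) := by
    ext s' a
    by_cases hs : s' = s
    · subst hs; simp
    · simp [hs]
  have hst := hstat _ hfeas
  rw [fderiv_expDisc_apply h, hdev, Finset.sum_eq_single s (fun s' _ hs => by simp [hs])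
    (by simp)] at hst
  simp only [Pi.single_eq_same, Pi.sub_apply, sub_mul, Finset.sum_sub_distrib,
    Pi.single_apply, ite_mul, one_mul, zero_mul, Finset.sum_ite_eq', Finset.mem_univ,
    if_true] at hst
  exact sub_nonpos.1 (nonpos_of_mul_nonpos_right hst (hvisit s))

theorem expDisc_le_of_fderiv_nonpos (hγ0 : 0 ≤ γ) (hγ1 : γ < 1)
    (hP : ∀ s a, P s a ∈ stdSimplex ℝ σ) (hρ : ∀ s, 0 ≤ ρ s) (hπ : ∀ s, π s ∈ stdSimplex ℝ α)
    (hvisit : ∀ s, 0 < ∑' t, γ ^ t * stateDist P π ρ t s)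
    (hstat : ∀ π' : σ → α → ℝ, (∀ s, π' s ∈ stdSimplex ℝ α) →
      fderiv ℝ (fun x => expDisc γ P x ρ f) π (π' - π) ≤ 0)
    (hπ' : ∀ s, π' s ∈ stdSimplex ℝ α) :
    expDisc γ P π' ρ f ≤ expDisc γ P π ρ f := by
  have h := norm_smul_transMat_lt_one hγ0 hγ1 hP hπ
  have h' := norm_smul_transMat_lt_one hγ0 hγ1 hP hπ'
  set Q := qValue γ P f (value γ P f π)
  have hgreedy : ∀ s b, Q s b ≤ ∑ a, π s a * Q s a := qValue_le_of_fderiv_nonpos h hπ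
    (fun s => (vecMul_resolvent_apply h s).symm ▸ hvisit s) hstat
  rw [← sub_nonpos, expDisc_sub_expDisc h h']
  refine Finset.sum_nonpos fun s _ => mul_nonpos_of_nonneg_of_nonpos ?_ ?_
  · rw [vecMul_resolvent_apply h']
    exact tsum_nonneg fun t => mul_nonneg (pow_nonneg hγ0 t)
      (stateDist_nonneg (fun s a => (hP s a).1) (fun s => (hπ' s).1) hρ t s)
  · calc ∑ a, (π' - π) s a * Q s a = ∑ a, π' s a * Q s a - ∑ a, π s a * Q s a := by
          simp only [Pi.sub_apply, sub_mul, Finset.sum_sub_distrib]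
      _ ≤ ∑ a, π' s a * ∑ b, π s b * Q s b - ∑ a, π s a * Q s a := by
          gcongr with a
          · exact (hπ' s).1 a
          · exact hgreedy s a
      _ = 0 := by rw [← Finset.sum_mul, (hπ' s).2, one_mul, sub_self]

end Norm

end

section

variable {σ α β : Type}

def mixPolicy [Fintype β] (w : σ → β → α → ℝ) (x : σ → β → ℝ) : σ → α → ℝ :=
  fun s a => ∑ b, x s b * w s b a

def liftKernel [Fintype α] (w : σ → β → α → ℝ) (P : σ → α → σ → ℝ) : σ → β → σ → ℝ :=
  fun s b s' => ∑ a, w s b a * P s a s'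

def liftReward [Fintype α] (w : σ → β → α → ℝ) (f : σ → α → ℝ) : σ → β → ℝ :=
  fun s b => ∑ a, w s b a * f s a

variable [Fintype α] {w : σ → β → α → ℝ} {P : σ → α → σ → ℝ}

lemma liftKernel_mem_stdSimplex [Fintype σ] (hw : ∀ s b, w s b ∈ stdSimplex ℝ α)
    (hP : ∀ s a, P s a ∈ stdSimplex ℝ σ) (s : σ) (b : β) :
    liftKernel w P s b ∈ stdSimplex ℝ σ := by
  have hsum : liftKernel w P s b = ∑ a, w s b a • P s a := by
    ext s'
    simp [liftKernel, Finset.sum_apply]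
  rw [hsum]
  exact (convex_stdSimplex ℝ σ).sum_mem (fun a _ => (hw s b).1 a) (hw s b).2 fun a _ => hP s a

variable [Fintype β]

lemma sum_mixPolicy_mul (w : σ → β → α → ℝ) (x : σ → β → ℝ) (s : σ) (g : α → ℝ) :
    ∑ a, mixPolicy w x s a * g a = ∑ b, x s b * ∑ a, w s b a * g a := by
  simp only [mixPolicy, Finset.sum_mul, Finset.mul_sum, mul_assoc]
  exact Finset.sum_comm

variable [Fintype σ]

lemma stateDist_mixPolicy (x : σ → β → ℝ) (ρ : σ → ℝ) (t : ℕ) :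
    stateDist P (mixPolicy w x) ρ t = stateDist (liftKernel w P) x ρ t := by
  induction t with
  | zero => rfl
  | succ t ih =>
    ext s'
    simp only [stateDist, ih, mul_assoc, ← Finset.mul_sum, sum_mixPolicy_mul, liftKernel]

lemma expDisc_mixPolicy (γ : ℝ) (x : σ → β → ℝ) (ρ : σ → ℝ) (f : σ → α → ℝ) :
    expDisc γ P (mixPolicy w x) ρ f = expDisc γ (liftKernel w P) x ρ (liftReward w f) := by
  simp only [expDisc, stateDist_mixPolicy, mul_assoc, ← Finset.mul_sum, sum_mixPolicy_mul,
    liftReward]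

end

end MDP

section Game

variable {N : ℕ} {S : Type} {A : Fin N → Type}

lemma jointPi_update_apply (θ : ∀ i, S → A i → ℝ) (i : Fin N) (x : S → A i → ℝ) (s : S)
    (a : ∀ j, A j) :
    jointPi (Function.update θ i x) s a = x s (a i) * ∏ j ∈ Finset.univ.erase i, θ j s (a j) := by
  rw [jointPi, ← Finset.mul_prod_erase _ _ (Finset.mem_univ i), Function.update_self]
  congr 1
  exact Finset.prod_congr rfl fun j hj => by rw [Function.update_of_ne (Finset.ne_of_mem_erase hj)]

variable [∀ i, Fintype (A i)]

lemma jointPi_mem_stdSimplex {θ : ∀ i, S → A i → ℝ} (hθ : feasible θ) (s : S) :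
    jointPi θ s ∈ stdSimplex ℝ (∀ j, A j) :=
  ⟨fun a => Finset.prod_nonneg fun j _ => (hθ j s).1 (a j), by
    rw [show ∑ a, jointPi θ s a = ∑ a : ∀ j, A j, ∏ j, θ j s (a j) from rfl, ← Fintype.prod_sum]
    exact Finset.prod_eq_one fun j _ => (hθ j s).2⟩

lemma feasible_update {θ : ∀ i, S → A i → ℝ} (hθ : feasible θ) (i : Fin N) {x : S → A i → ℝ}
    (hx : ∀ s, x s ∈ stdSimplex ℝ (A i)) : feasible (Function.update θ i x) := by
  intro j s
  by_cases hj : j = i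
  · subst hj; simpa using hx s
  · simpa [hj] using hθ j s

variable [∀ i, DecidableEq (A i)]

def deviationKernel (θ : ∀ i, S → A i → ℝ) (i : Fin N) : S → A i → (∀ j, A j) → ℝ :=
  fun s b => jointPi (Function.update θ i fun _ => Pi.single b 1) s

lemma jointPi_update_eq_mixPolicy (θ : ∀ i, S → A i → ℝ) (i : Fin N) (x : S → A i → ℝ) :
    jointPi (Function.update θ i x) = MDP.mixPolicy (deviationKernel θ i) x := by
  ext s a
  simp only [MDP.mixPolicy, deviationKernel, jointPi_update_apply, ← mul_assoc, ← Finset.sum_mul,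
    Pi.single_apply, mul_ite, mul_one, mul_zero, Finset.sum_ite_eq, Finset.mem_univ, if_true]

lemma deviationKernel_mem_stdSimplex {θ : ∀ i, S → A i → ℝ} (hθ : feasible θ) (i : Fin N)
    (s : S) (b : A i) : deviationKernel θ i s b ∈ stdSimplex ℝ (∀ j, A j) :=
  jointPi_mem_stdSimplex (feasible_update hθ i fun _ => single_mem_stdSimplex ℝ b) s

end Game

theorem first_order_stationary_is_nash_equilibrium_general
    {N : ℕ} {S : Type} {A : Fin N → Type}
    [Fintype S]
    [∀ i, Fintype (A i)]
    (γ : ℝ) (hγ0 : 0 ≤ γ) (hγ1 : γ < 1)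
    (P : S → (∀ i, A i) → S → ℝ) (hP : ∀ s a, P s a ∈ stdSimplex ℝ S)
    (r : Fin N → S → (∀ i, A i) → ℝ)
    (ρ : S → ℝ) (hρ : ρ ∈ stdSimplex ℝ S)
    -- Assumption 1 : d_θ(s) > 0 for all s and all feasible θ
    (hA1 : ∀ ϑ : ∀ i, S → A i → ℝ, feasible ϑ → ∀ s : S, 0 < visit γ P ϑ ρ s)
    (θ : ∀ i, S → A i → ℝ) (hθ : feasible θ)
    -- θ is a first-order stationary policy:
    (hstat : ∀ i : Fin N, ∀ θi' : S → A i → ℝ,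
      (∀ s, θi' s ∈ stdSimplex ℝ (A i)) →
      fderiv ℝ (fun x : S → A i → ℝ =>
          Jtot γ P ρ (Function.update θ i x) (r i)) (θ i) (θi' - θ i) ≤ 0) :
    -- θ is a Nash equilibrium:
    ∀ i : Fin N, ∀ θi' : S → A i → ℝ,
      (∀ s, θi' s ∈ stdSimplex ℝ (A i)) →
      Jtot γ P ρ (Function.update θ i θi') (r i) ≤ Jtot γ P ρ θ (r i) := by
  classical
  intro i θi' hθi'
  set w := deviationKernel θ i
  have hJ (x : S → A i → ℝ) : Jtot γ P ρ (Function.update θ i x) (r i)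
      = expDisc γ (MDP.liftKernel w P) x ρ (MDP.liftReward w (r i)) := by
    rw [Jtot, jointPi_update_eq_mixPolicy, MDP.expDisc_mixPolicy]
  have hθw : jointPi θ = MDP.mixPolicy w (θ i) := by
    rw [← jointPi_update_eq_mixPolicy, Function.update_eq_self]
  have hvisit (s : S) : 0 < ∑' t, γ ^ t * stateDist (MDP.liftKernel w P) (θ i) ρ t s := by
    have hd := hA1 θ hθ s
    simp only [visit, hθw, MDP.stateDist_mixPolicy] at hd
    exact pos_of_mul_pos_right hd (sub_nonneg.2 hγ1.le)
  rw [hJ, Jtot, hθw, MDP.expDisc_mixPolicy]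
  exact MDP.expDisc_le_of_fderiv_nonpos hγ0 hγ1
    (MDP.liftKernel_mem_stdSimplex (deviationKernel_mem_stdSimplex hθ i) hP) hρ.1 (hθ i) hvisit
    (fun x hx => by simpa only [hJ] using hstat i x hx) hθi'

/-- Under Assumption 1 (positive discounted state-visitation
measure everywhere), every first-order stationary policy of a finite Markov
game under direct policy parameterization is a Nash equilibrium. -/
theorem first_order_stationary_is_nash_equilibrium
    {N : ℕ} {S : Type} {A : Fin N → Type}
    [Fintype S] [DecidableEq S] [Nonempty S]
    [∀ i, Fintype (A i)] [∀ i, Nonempty (A i)]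
    (γ : ℝ) (hγ0 : 0 ≤ γ) (hγ1 : γ < 1)
    (P : S → (∀ i, A i) → S → ℝ) (hP : ∀ s a, P s a ∈ stdSimplex ℝ S)
    (r : Fin N → S → (∀ i, A i) → ℝ)
    (ρ : S → ℝ) (hρ : ρ ∈ stdSimplex ℝ S)
    -- Assumption 1 : d_θ(s) > 0 for all s and all feasible θ
    (hA1 : ∀ ϑ : ∀ i, S → A i → ℝ, feasible ϑ → ∀ s : S, 0 < visit γ P ϑ ρ s)
    (θ : ∀ i, S → A i → ℝ) (hθ : feasible θ)
    -- θ is a first-order stationary policy: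
    (hstat : ∀ i : Fin N, ∀ θi' : S → A i → ℝ,
      (∀ s, θi' s ∈ stdSimplex ℝ (A i)) →
      fderiv ℝ (fun x : S → A i → ℝ =>
          Jtot γ P ρ (Function.update θ i x) (r i)) (θ i) (θi' - θ i) ≤ 0) :
    -- θ is a Nash equilibrium:
    ∀ i : Fin N, ∀ θi' : S → A i → ℝ,
      (∀ s, θi' s ∈ stdSimplex ℝ (A i)) →
      Jtot γ P ρ (Function.update θ i θi') (r i) ≤ Jtot γ P ρ θ (r i) :=
  first_order_stationary_is_nash_equilibrium_general γ hγ0 hγ1 P hP r ρ hρ hA1 θ hθ hstat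
end

section
/- (MPG construction from individual rewards) Consider a finite product-structured Markov game in which each agent i's reward depends only on its own local state and action, r_i(s_t, a_t) = r_i^self(s_{i,t}, a_{i,t}), the transition kernel factorizes as P(s'|s,a) = ∏_{i=1}^N P_i(s_i'|s_i,a_i), the initial state distribution is a product ρ = ρ_1 ⊗ ⋯ ⊗ ρ_N, and each agent uses a local policy π_{i,θ_i}(a_i|s_i). Then the game is a Markov potential game with potential function φ^self(s_t, a_t) = Σ_{i∈N} r_i^self(s_{i,t}, a_{i,t}); that is, for every agent i, every θ_i, θ_i' ∈ X_i, every θ_{-i}, and every initial state s, the difference in agent i's expected discounted reward under π_{(θ_i',θ_{-i})} versus π_{(θ_i,θ_{-i})} equals the corresponding difference in the expected discounted sum of φ^self. -/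
open scoped BigOperators

/-! Common framework for finite *product-structured* Markov games.  Agents are
indexed by `Fin N`; agent `i` has local finite state space `S i` and finite
action space `A i`.  The global state space is `∀ i, S i`, the transition
kernel factorizes per agent, the initial distribution is a product, and each
agent uses a local directly parameterized policy `θ i : S i → A i → ℝ`. -/

section ProdMGDefs

variable {N : ℕ} {S A : Fin N → Type}
variable [∀ i, Fintype (S i)] [∀ i, Fintype (A i)]

/-- Joint policy `π_θ(a|s) = ∏ i, θ_i(a_i|s_i)` induced by the local
directly parameterized policies. -/
def jointPiL (θ : ∀ i, S i → A i → ℝ) : (∀ i, S i) → (∀ i, A i) → ℝ :=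
  fun s a => ∏ i, θ i (s i) (a i)

/-- Factorized transition kernel `P(s'|s,a) = ∏ i, P_i(s_i'|s_i,a_i)`. -/
def jointP (P : ∀ i, S i → A i → S i → ℝ) :
    (∀ i, S i) → (∀ i, A i) → (∀ i, S i) → ℝ :=
  fun s a s' => ∏ i, P i (s i) (a i) (s' i)

/-- Product initial state distribution `ρ = ρ_1 ⊗ ⋯ ⊗ ρ_N`. -/
def jointRho (ρ : ∀ i, S i → ℝ) : (∀ i, S i) → ℝ :=
  fun s => ∏ i, ρ i (s i)

/-- The feasible set of local policy profiles: each `θ i (s i)` lies in the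
probability simplex `Δ(A i)`. -/
def feasibleL (θ : ∀ i, S i → A i → ℝ) : Prop :=
  ∀ i, ∀ si, θ i si ∈ stdSimplex ℝ (A i)

end ProdMGDefs

/-! Because the kernel, the joint policy and the point mass at `s` are all products over the
agents, the law of `(s_t, a_t)` is the product of the agents' local laws. A reward that depends
only on agent `j`'s local state and action therefore has the same expected discounted sum as
under agent `j`'s own chain, so it depends on `θ j` alone. The value of the potential is the sum
of these local values, and replacing `θ i` changes only the `i`-th summand, which is agent `i`'s
own value. -/

section LocalChain

variable {σ α : Type} [Fintype σ] [Fintype α]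

def stepExp (P : σ → α → σ → ℝ) (π : σ → α → ℝ) (ρ : σ → ℝ) (f : σ → α → ℝ) (t : ℕ) : ℝ :=
  ∑ s, ∑ a, stateDist P π ρ t s * π s a * f s a

theorem expDisc_eq_tsum_stepExp (γ : ℝ) (P : σ → α → σ → ℝ) (π : σ → α → ℝ) (ρ : σ → ℝ)
    (f : σ → α → ℝ) : expDisc γ P π ρ f = ∑' t, γ ^ t * stepExp P π ρ f t := rfl

theorem stepExp_sum {ι : Type} (P : σ → α → σ → ℝ) (π : σ → α → ℝ) (ρ : σ → ℝ)
    (J : Finset ι) (f : ι → σ → α → ℝ) (t : ℕ) :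
    stepExp P π ρ (fun s a => ∑ j ∈ J, f j s a) t = ∑ j ∈ J, stepExp P π ρ (f j) t := by
  simp only [stepExp, Finset.mul_sum]
  exact Finset.sum_comm_cycle

theorem sum_stateDist {P : σ → α → σ → ℝ} {π : σ → α → ℝ} {ρ : σ → ℝ}
    (hP : ∀ s a, ∑ s', P s a s' = 1) (hπ : ∀ s, ∑ a, π s a = 1) (hρ : ∑ s, ρ s = 1) (t : ℕ) :
    ∑ s, stateDist P π ρ t s = 1 := by
  induction t with
  | zero => exact hρ
  | succ t ih =>
    calc ∑ s', ∑ s, ∑ a, stateDist P π ρ t s * π s a * P s a s'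
        = ∑ s, ∑ a, stateDist P π ρ t s * π s a * ∑ s', P s a s' := by
          simp only [Finset.mul_sum]
          exact Finset.sum_comm_cycle.symm
      _ = ∑ s, stateDist P π ρ t s * ∑ a, π s a := by simp only [hP, mul_one, Finset.mul_sum]
      _ = 1 := by simp only [hπ, mul_one, ih]

theorem stateDist_nonneg {P : σ → α → σ → ℝ} {π : σ → α → ℝ} {ρ : σ → ℝ}
    (hP : ∀ s a s', 0 ≤ P s a s') (hπ : ∀ s a, 0 ≤ π s a) (hρ : ∀ s, 0 ≤ ρ s) (t : ℕ) (s : σ) :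
    0 ≤ stateDist P π ρ t s := by
  induction t generalizing s with
  | zero => exact hρ s
  | succ t ih =>
    exact Finset.sum_nonneg fun s _ => Finset.sum_nonneg fun a _ =>
      mul_nonneg (mul_nonneg (ih s) (hπ s a)) (hP s a _)

theorem abs_stepExp_le {P : σ → α → σ → ℝ} {π : σ → α → ℝ} {ρ : σ → ℝ}
    (hP : ∀ s a, P s a ∈ stdSimplex ℝ σ) (hπ : ∀ s, π s ∈ stdSimplex ℝ α)
    (hρ : ρ ∈ stdSimplex ℝ σ) {f : σ → α → ℝ} {M : ℝ} (hM : ∀ s a, |f s a| ≤ M) (t : ℕ) :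
    |stepExp P π ρ f t| ≤ M := by
  have hw : ∀ s a, 0 ≤ stateDist P π ρ t s * π s a := fun s a =>
    mul_nonneg (stateDist_nonneg (fun s a => (hP s a).1) (fun s => (hπ s).1) hρ.1 t s)
      ((hπ s).1 a)
  calc |stepExp P π ρ f t|
      ≤ ∑ s, ∑ a, stateDist P π ρ t s * π s a * M := by
        refine (Finset.abs_sum_le_sum_abs _ _).trans (Finset.sum_le_sum fun s _ => ?_)
        refine (Finset.abs_sum_le_sum_abs _ _).trans (Finset.sum_le_sum fun a _ => ?_)
        rw [abs_mul, abs_of_nonneg (hw s a)]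
        exact mul_le_mul_of_nonneg_left (hM s a) (hw s a)
    _ = M * ∑ s, stateDist P π ρ t s * ∑ a, π s a := by
        simp only [Finset.mul_sum]
        exact Finset.sum_congr rfl fun s _ => Finset.sum_congr rfl fun a _ => by ring
    _ = M := by
        simp only [fun s => (hπ s).2, mul_one,
          sum_stateDist (fun s a => (hP s a).2) (fun s => (hπ s).2) hρ.2]

theorem summable_discount_mul_stepExp {γ : ℝ} (hγ0 : 0 ≤ γ) (hγ1 : γ < 1)
    {P : σ → α → σ → ℝ} {π : σ → α → ℝ} {ρ : σ → ℝ}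
    (hP : ∀ s a, P s a ∈ stdSimplex ℝ σ) (hπ : ∀ s, π s ∈ stdSimplex ℝ α)
    (hρ : ρ ∈ stdSimplex ℝ σ) (f : σ → α → ℝ) :
    Summable fun t => γ ^ t * stepExp P π ρ f t := by
  obtain ⟨M, hM⟩ := Finite.exists_le fun p : σ × α => |f p.1 p.2|
  refine .of_norm_bounded ((summable_geometric_of_lt_one hγ0 hγ1).mul_right M) fun t => ?_
  rw [Real.norm_eq_abs, abs_mul, abs_of_nonneg (pow_nonneg hγ0 t)]
  exact mul_le_mul_of_nonneg_left (abs_stepExp_le hP hπ hρ (fun s a => hM (s, a)) t)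
    (pow_nonneg hγ0 t)

theorem dirac_mem_stdSimplex {σ : Type} [Fintype σ] [DecidableEq σ] (s : σ) :
    dirac s ∈ stdSimplex ℝ σ :=
  ⟨fun s' => by by_cases h : s' = s <;> simp [dirac, h], by simp [dirac]⟩

end LocalChain

section ProductChain

variable {N : ℕ} {S A : Fin N → Type}

theorem jointRho_dirac [∀ i, DecidableEq (S i)] (s : ∀ i, S i) :
    jointRho (fun i => dirac (s i)) = dirac s := by
  funext s'
  simp only [jointRho, dirac, Finset.prod_boole, Finset.mem_univ, true_imp_iff, funext_iff]

theorem feasibleL_update [∀ i, Fintype (A i)] {θ : ∀ i, S i → A i → ℝ} (hθ : feasibleL θ)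
    {i : Fin N} {θi : S i → A i → ℝ} (hθi : ∀ si, θi si ∈ stdSimplex ℝ (A i)) :
    feasibleL (Function.update θ i θi) := by
  intro j
  rcases eq_or_ne j i with rfl | hj
  · simpa using hθi
  · simpa [Function.update_of_ne hj] using hθ j

variable [∀ i, Fintype (S i)] [∀ i, Fintype (A i)]

theorem sum_sum_prod_apply (g : ∀ i, S i → A i → ℝ) :
    ∑ s : ∀ i, S i, ∑ a : ∀ i, A i, ∏ i, g i (s i) (a i) = ∏ i, ∑ si, ∑ ai, g i si ai := by
  rw [Fintype.prod_sum fun i si => ∑ ai, g i si ai]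
  exact Finset.sum_congr rfl fun s _ => (Fintype.prod_sum _).symm

theorem sum_sum_prod_mul_apply_eval (g : ∀ i, S i → A i → ℝ) (j : Fin N)
    (hg : ∀ i, i ≠ j → ∑ si, ∑ ai, g i si ai = 1) (f : S j → A j → ℝ) :
    ∑ s : ∀ i, S i, ∑ a : ∀ i, A i, (∏ i, g i (s i) (a i)) * f (s j) (a j)
      = ∑ sj, ∑ aj, g j sj aj * f sj aj := by
  -- absorbing `f` into the `j`-th factor makes the whole sum factorize over the agents
  set h := Function.update g j fun sj aj => g j sj aj * f sj aj
  have hprod : ∀ (s : ∀ i, S i) (a : ∀ i, A i),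
      (∏ i, g i (s i) (a i)) * f (s j) (a j) = ∏ i, h i (s i) (a i) := by
    intro s a
    have hoff : ∏ i ∈ Finset.univ.erase j, h i (s i) (a i)
        = ∏ i ∈ Finset.univ.erase j, g i (s i) (a i) :=
      Finset.prod_congr rfl fun i hi => by
        simp only [h, Function.update_of_ne (Finset.ne_of_mem_erase hi)]
    rw [← Finset.mul_prod_erase _ _ (Finset.mem_univ j),
      ← Finset.mul_prod_erase _ (fun i => h i (s i) (a i)) (Finset.mem_univ j), hoff]
    simp only [h, Function.update_self]
    ring
  simp only [hprod, sum_sum_prod_apply]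
  rw [Finset.prod_eq_single j (fun i _ hi => by simp only [h, Function.update_of_ne hi, hg i hi])
    (fun hj => absurd (Finset.mem_univ j) hj)]
  simp only [h, Function.update_self]

theorem stateDist_jointP (P : ∀ i, S i → A i → S i → ℝ) (θ : ∀ i, S i → A i → ℝ)
    (ρ : ∀ i, S i → ℝ) (t : ℕ) (s : ∀ i, S i) :
    stateDist (jointP P) (jointPiL θ) (jointRho ρ) t s
      = ∏ i, stateDist (P i) (θ i) (ρ i) t (s i) := by
  induction t generalizing s with
  | zero => rfl
  | succ t ih =>
    simp only [stateDist, ih, jointPiL, jointP, ← Finset.prod_mul_distrib]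
    exact sum_sum_prod_apply fun i si ai =>
      stateDist (P i) (θ i) (ρ i) t si * θ i si ai * P i si ai (s i)

theorem stepExp_jointP_eval {P : ∀ i, S i → A i → S i → ℝ} {θ : ∀ i, S i → A i → ℝ}
    {ρ : ∀ i, S i → ℝ} (hP : ∀ i si ai, ∑ si', P i si ai si' = 1)
    (hθ : ∀ i si, ∑ ai, θ i si ai = 1) (hρ : ∀ i, ∑ si, ρ i si = 1)
    (j : Fin N) (f : S j → A j → ℝ) (t : ℕ) :
    stepExp (jointP P) (jointPiL θ) (jointRho ρ) (fun s a => f (s j) (a j)) t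
      = stepExp (P j) (θ j) (ρ j) f t := by
  have hmarg : ∀ i, ∑ si, ∑ ai, stateDist (P i) (θ i) (ρ i) t si * θ i si ai = 1 := fun i => by
    simp only [← Finset.mul_sum, hθ, mul_one, sum_stateDist (hP i) (hθ i) (hρ i)]
  simp only [stepExp, stateDist_jointP, jointPiL, ← Finset.prod_mul_distrib]
  exact sum_sum_prod_mul_apply_eval _ j (fun i _ => hmarg i) f

theorem expDisc_jointP_eval (γ : ℝ) {P : ∀ i, S i → A i → S i → ℝ} {θ : ∀ i, S i → A i → ℝ}
    {ρ : ∀ i, S i → ℝ} (hP : ∀ i si ai, ∑ si', P i si ai si' = 1)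
    (hθ : ∀ i si, ∑ ai, θ i si ai = 1) (hρ : ∀ i, ∑ si, ρ i si = 1)
    (j : Fin N) (f : S j → A j → ℝ) :
    expDisc γ (jointP P) (jointPiL θ) (jointRho ρ) (fun s a => f (s j) (a j))
      = expDisc γ (P j) (θ j) (ρ j) f := by
  simp only [expDisc_eq_tsum_stepExp, stepExp_jointP_eval hP hθ hρ]

theorem expDisc_jointP_sum_eval {γ : ℝ} (hγ0 : 0 ≤ γ) (hγ1 : γ < 1)
    {P : ∀ i, S i → A i → S i → ℝ} {θ : ∀ i, S i → A i → ℝ} {ρ : ∀ i, S i → ℝ}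
    (hP : ∀ i si ai, P i si ai ∈ stdSimplex ℝ (S i)) (hθ : feasibleL θ)
    (hρ : ∀ i, ρ i ∈ stdSimplex ℝ (S i)) (f : ∀ i, S i → A i → ℝ) :
    expDisc γ (jointP P) (jointPiL θ) (jointRho ρ) (fun s a => ∑ j, f j (s j) (a j))
      = ∑ j, expDisc γ (P j) (θ j) (ρ j) (f j) := by
  simp only [expDisc_eq_tsum_stepExp, stepExp_sum, Finset.mul_sum,
    stepExp_jointP_eval (fun i si ai => (hP i si ai).2) (fun i si => (hθ i si).2)
      (fun i => (hρ i).2)]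
  exact Summable.tsum_finsetSum fun j _ =>
    summable_discount_mul_stepExp hγ0 hγ1 (hP j) (hθ j) (hρ j) (f j)

end ProductChain

theorem mpg_construction_from_individual_rewards_general
    {N : ℕ} {S A : Fin N → Type}
    [∀ i, Fintype (S i)] [∀ i, DecidableEq (S i)] [∀ i, Fintype (A i)]
    (γ : ℝ) (hγ0 : 0 ≤ γ) (hγ1 : γ < 1)
    (P : ∀ i, S i → A i → S i → ℝ)
    (hP : ∀ i si ai, P i si ai ∈ stdSimplex ℝ (S i))
    (rself : ∀ i, S i → A i → ℝ) :
    ∀ i : Fin N, ∀ θ : ∀ j, S j → A j → ℝ, feasibleL θ →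
      ∀ θi' : S i → A i → ℝ, (∀ si, θi' si ∈ stdSimplex ℝ (A i)) →
        ∀ s : ∀ j, S j,
          expDisc γ (jointP P) (jointPiL (Function.update θ i θi')) (dirac s)
              (fun st b => rself i (st i) (b i))
            - expDisc γ (jointP P) (jointPiL θ) (dirac s)
              (fun st b => rself i (st i) (b i))
          = expDisc γ (jointP P) (jointPiL (Function.update θ i θi')) (dirac s)
              (fun st b => ∑ j, rself j (st j) (b j))
            - expDisc γ (jointP P) (jointPiL θ) (dirac s)
              (fun st b => ∑ j, rself j (st j) (b j)) := by
  intro i θ hθ θi' hθi' s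
  have hθ' := feasibleL_update hθ hθi'
  have hδ : ∀ j, dirac (s j) ∈ stdSimplex ℝ (S j) := fun j => dirac_mem_stdSimplex (s j)
  have hPsum : ∀ j sj aj, ∑ sj', P j sj aj sj' = 1 := fun j sj aj => (hP j sj aj).2
  rw [← jointRho_dirac s,
    expDisc_jointP_eval γ hPsum (fun j sj => (hθ' j sj).2) (fun j => (hδ j).2),
    expDisc_jointP_eval γ hPsum (fun j sj => (hθ j sj).2) (fun j => (hδ j).2),
    expDisc_jointP_sum_eval hγ0 hγ1 hP hθ' hδ, expDisc_jointP_sum_eval hγ0 hγ1 hP hθ hδ,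
    ← Finset.sum_sub_distrib,
    Finset.sum_eq_single i (fun j _ hj => by rw [Function.update_of_ne hj, sub_self])
      (fun hi => absurd (Finset.mem_univ i) hi),
    Function.update_self]

/-- **MPG construction from individual rewards.** In a finite
product-structured Markov game where each agent's reward depends only on its
own local state and action, the game is a Markov potential game with potential
`φ^self(s,a) = ∑ i, r_i^self(s_i, a_i)`. -/
theorem mpg_construction_from_individual_rewards
    {N : ℕ} {S A : Fin N → Type}
    [∀ i, Fintype (S i)] [∀ i, DecidableEq (S i)] [∀ i, Fintype (A i)]
    [∀ i, Nonempty (S i)] [∀ i, Nonempty (A i)]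
    (γ : ℝ) (hγ0 : 0 ≤ γ) (hγ1 : γ < 1)
    (P : ∀ i, S i → A i → S i → ℝ)
    (hP : ∀ i si ai, P i si ai ∈ stdSimplex ℝ (S i))
    (ρ : ∀ i, S i → ℝ) (hρ : ∀ i, ρ i ∈ stdSimplex ℝ (S i))
    (rself : ∀ i, S i → A i → ℝ) :
    ∀ i : Fin N, ∀ θ : ∀ j, S j → A j → ℝ, feasibleL θ →
      ∀ θi' : S i → A i → ℝ, (∀ si, θi' si ∈ stdSimplex ℝ (A i)) →
        ∀ s : ∀ j, S j,
          expDisc γ (jointP P) (jointPiL (Function.update θ i θi')) (dirac s)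
              (fun st b => rself i (st i) (b i))
            - expDisc γ (jointP P) (jointPiL θ) (dirac s)
              (fun st b => rself i (st i) (b i))
          = expDisc γ (jointP P) (jointPiL (Function.update θ i θi')) (dirac s)
              (fun st b => ∑ j, rself j (st j) (b j))
            - expDisc γ (jointP P) (jointPiL θ) (dirac s)
              (fun st b => ∑ j, rself j (st j) (b j)) :=
  mpg_construction_from_individual_rewards_general γ hγ0 hγ1 P hP rself
end

section
/- (Invariance of other agents' discounted rewards) In a finite product-structured Markov game with factorized transition kernel P(s'|s,a) = ∏_{i=1}^N P_i(s_i'|s_i,a_i), product initial distribution ρ = ρ_1 ⊗ ⋯ ⊗ ρ_N, and local policies π_{i,θ_i}(a_i|s_i), fix an agent i and any function f : (∏_{j≠i} S_j) × (∏_{j≠i} A_j) → ℝ depending only on the local states and actions of the agents other than i. Then the expected discounted sum E[Σ_{t=0}^∞ γ^t f(s_{-i,t}, a_{-i,t}) | π_{(θ_i,θ_{-i})}, s_0 ~ ρ] is the same for all choices of θ_i ∈ X_i; in particular, E[Σ_{t=0}^∞ γ^t f(s_{-i,t}, a_{-i,t}) | π_{(θ_i',θ_{-i})}] = E[Σ_{t=0}^∞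 γ^t f(s_{-i,t}, a_{-i,t}) | π_{(θ_i,θ_{-i})}] for every θ_i, θ_i' ∈ X_i. -/
open scoped BigOperators

section Helpers
variable {N : ℕ} {S A : Fin N → Type} [∀ i, Fintype (S i)] [∀ i, Fintype (A i)]


private lemma sum_pi_prod {ι : Type} [Fintype ι] [DecidableEq ι] {δ : ι → Type}
    [∀ j, Fintype (δ j)] (f : ∀ j, δ j → ℝ) :
    ∑ x : ∀ j, δ j, ∏ j, f j (x j) = ∏ j, ∑ y, f j y :=
  (Fintype.prod_sum f).symm

private lemma stateDist_mass {σ α : Type} [Fintype σ] [Fintype α]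
    (P : σ → α → σ → ℝ) (hP : ∀ s a, ∑ s', P s a s' = 1)
    (π : σ → α → ℝ) (hπ : ∀ s, ∑ a, π s a = 1)
    (ρ : σ → ℝ) (hρ : ∑ s, ρ s = 1) :
    ∀ t, ∑ s, stateDist P π ρ t s = 1
  | 0 => hρ
  | (t+1) => by
    have ih := stateDist_mass P hP π hπ ρ hρ t
    show ∑ s', ∑ s, ∑ a, stateDist P π ρ t s * π s a * P s a s' = 1
    rw [Finset.sum_comm]
    have h1 : ∀ s, (∑ s' : σ, ∑ a, stateDist P π ρ t s * π s a * P s a s')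
        = stateDist P π ρ t s := by
      intro s
      rw [Finset.sum_comm]
      calc ∑ a, ∑ s', stateDist P π ρ t s * π s a * P s a s'
          = ∑ a, stateDist P π ρ t s * π s a := by
            refine Finset.sum_congr rfl fun a _ => ?_
            rw [← Finset.mul_sum, hP s a, mul_one]
        _ = stateDist P π ρ t s := by rw [← Finset.mul_sum, hπ s, mul_one]
    rw [Finset.sum_congr rfl fun s _ => h1 s, ih]

private lemma stateDist_factor (P : ∀ i, S i → A i → S i → ℝ)
    (θ : ∀ j, S j → A j → ℝ) (ρ : ∀ i, S i → ℝ) :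
    ∀ (t : ℕ) (s : ∀ j, S j),
      stateDist (jointP P) (jointPiL θ) (jointRho ρ) t s
        = ∏ j, stateDist (P j) (θ j) (ρ j) t (s j)
  | 0, s => rfl
  | (t+1), s => by
    show (∑ s', ∑ a, stateDist (jointP P) (jointPiL θ) (jointRho ρ) t s'
        * jointPiL θ s' a * jointP P s' a s) = _
    have h1 : ∀ (s' : ∀ j, S j) (a : ∀ j, A j),
        stateDist (jointP P) (jointPiL θ) (jointRho ρ) t s' * jointPiL θ s' a
            * jointP P s' a s
        = ∏ j, (stateDist (P j) (θ j) (ρ j) t (s' j) * θ j (s' j) (a j)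
            * P j (s' j) (a j) (s j)) := by
      intro s' a
      rw [stateDist_factor P θ ρ t s']
      simp only [jointPiL, jointP, ← Finset.prod_mul_distrib]
    calc (∑ s', ∑ a, stateDist (jointP P) (jointPiL θ) (jointRho ρ) t s'
          * jointPiL θ s' a * jointP P s' a s)
        = ∑ s' : ∀ j, S j, ∑ a : ∀ j, A j,
            ∏ j, (stateDist (P j) (θ j) (ρ j) t (s' j) * θ j (s' j) (a j)
              * P j (s' j) (a j) (s j)) := by
          exact Finset.sum_congr rfl fun s' _ => Finset.sum_congr rfl fun a _ => h1 s' a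
      _ = ∑ s' : ∀ j, S j, ∏ j, ∑ y, (stateDist (P j) (θ j) (ρ j) t (s' j)
            * θ j (s' j) y * P j (s' j) y (s j)) := by
          classical
          exact Finset.sum_congr rfl fun s' _ =>
            sum_pi_prod (fun j y => stateDist (P j) (θ j) (ρ j) t (s' j)
              * θ j (s' j) y * P j (s' j) y (s j))
      _ = ∏ j, ∑ x, ∑ y, (stateDist (P j) (θ j) (ρ j) t x * θ j x y
            * P j x y (s j)) := by
          classical
          exact sum_pi_prod (fun j x => ∑ y, stateDist (P j) (θ j) (ρ j) t x
            * θ j x y * P j x y (s j))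
      _ = ∏ j, stateDist (P j) (θ j) (ρ j) (t+1) (s j) := rfl

private lemma split_eval_same {δ : Fin N → Type} (i : Fin N) (x : δ i)
    (y : ∀ j : {j : Fin N // j ≠ i}, δ j) :
    (Equiv.piSplitAt i δ).symm (x, y) i = x := dif_pos rfl

private lemma split_eval_ne {δ : Fin N → Type} (i : Fin N) (x : δ i)
    (y : ∀ j : {j : Fin N // j ≠ i}, δ j) (j : Fin N) (h : j ≠ i) :
    (Equiv.piSplitAt i δ).symm (x, y) j = y ⟨j, h⟩ := dif_neg h

private lemma sum_pi_split {δ : Fin N → Type} [∀ j, Fintype (δ j)] (i : Fin N)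
    (G : (∀ j, δ j) → ℝ) :
    ∑ s : ∀ j, δ j, G s
      = ∑ x : δ i, ∑ y : ∀ j : {j : Fin N // j ≠ i}, δ j,
          G ((Equiv.piSplitAt i δ).symm (x, y)) := by
  rw [← ((Equiv.piSplitAt i δ).symm.sum_comp G)]
  exact Fintype.sum_prod_type (f := fun p => G ((Equiv.piSplitAt i δ).symm p))

private lemma prod_split (i : Fin N) (g : Fin N → ℝ) :
    ∏ j, g j = g i * ∏ j : {j : Fin N // j ≠ i}, g j.1 := by
  rw [← Finset.mul_prod_erase Finset.univ g (Finset.mem_univ i)]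
  congr 1
  exact Finset.prod_subtype (Finset.univ.erase i)
    (fun x => by simp [Finset.mem_erase]) g

private lemma inner_sum_split (i : Fin N)
    (F : (∀ j : {j : Fin N // j ≠ i}, S j) → (∀ j : {j : Fin N // j ≠ i}, A j) → ℝ)
    (c : ∀ j, S j → A j → ℝ) :
    ∑ s : ∀ j, S j, ∑ a : ∀ j, A j,
        (∏ j, c j (s j) (a j)) * F (fun j => s j.1) (fun j => a j.1)
      = (∑ x, ∑ y, c i x y)
        * ∑ s' : ∀ j : {j : Fin N // j ≠ i}, S j,
            ∑ a' : ∀ j : {j : Fin N // j ≠ i}, A j,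
              (∏ j : {j : Fin N // j ≠ i}, c j.1 (s' j) (a' j)) * F s' a' := by
  rw [sum_pi_split i]
  have key : ∀ (x : S i) (s' : ∀ j : {j : Fin N // j ≠ i}, S j)
      (y : A i) (a' : ∀ j : {j : Fin N // j ≠ i}, A j),
      (∏ j, c j ((Equiv.piSplitAt i S).symm (x, s') j)
          ((Equiv.piSplitAt i A).symm (y, a') j))
        * F (fun j => (Equiv.piSplitAt i S).symm (x, s') j.1)
            (fun j => (Equiv.piSplitAt i A).symm (y, a') j.1)
      = c i x y * ((∏ j : {j : Fin N // j ≠ i}, c j.1 (s' j) (a' j)) * F s' a') := by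
    intro x s' y a'
    have hs : ∀ j : {j : Fin N // j ≠ i},
        (Equiv.piSplitAt i S).symm (x, s') j.1 = s' j := fun j => by
      rw [split_eval_ne i x s' j.1 j.2]
    have ha : ∀ j : {j : Fin N // j ≠ i},
        (Equiv.piSplitAt i A).symm (y, a') j.1 = a' j := fun j => by
      rw [split_eval_ne i y a' j.1 j.2]
    rw [prod_split i]
    rw [split_eval_same, split_eval_same, mul_assoc]
    congr 2
    · exact Finset.prod_congr rfl fun j _ => by rw [hs j, ha j]
    · congr 1 <;> funext j
      · exact hs j
      · exact ha j
  calc ∑ x : S i, ∑ s' : ∀ j : {j : Fin N // j ≠ i}, S j,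
        ∑ a : ∀ j, A j,
          (∏ j, c j ((Equiv.piSplitAt i S).symm (x, s') j) (a j))
            * F (fun j => (Equiv.piSplitAt i S).symm (x, s') j.1) (fun j => a j.1)
      = ∑ x : S i, ∑ s' : ∀ j : {j : Fin N // j ≠ i}, S j,
          ∑ y : A i, ∑ a' : ∀ j : {j : Fin N // j ≠ i}, A j,
            c i x y * ((∏ j : {j : Fin N // j ≠ i}, c j.1 (s' j) (a' j)) * F s' a') := by
        refine Finset.sum_congr rfl fun x _ => Finset.sum_congr rfl fun s' _ => ?_
        rw [sum_pi_split i]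
        exact Finset.sum_congr rfl fun y _ => Finset.sum_congr rfl fun a' _ => key x s' y a'
    _ = (∑ x, ∑ y, c i x y)
        * ∑ s' : ∀ j : {j : Fin N // j ≠ i}, S j,
            ∑ a' : ∀ j : {j : Fin N // j ≠ i}, A j,
              (∏ j : {j : Fin N // j ≠ i}, c j.1 (s' j) (a' j)) * F s' a' := by
        rw [Finset.sum_mul]
        refine Finset.sum_congr rfl fun x _ => ?_
        rw [Finset.sum_comm, Finset.sum_mul]
        refine Finset.sum_congr rfl fun y _ => ?_
        rw [Finset.mul_sum]
        refine Finset.sum_congr rfl fun s' _ => ?_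
        rw [Finset.mul_sum]

end Helpers


/-- **Invariance of other agents' discounted rewards.** In a
finite product-structured Markov game, if `f` depends only on the local states
and actions of the agents other than `i`, then the expected discounted sum
`E[∑ₜ γ^t f(s_{-i,t}, a_{-i,t})]` is unaffected by agent `i`'s policy. -/
theorem invariance_of_other_agents_discounted_rewards
    {N : ℕ} {S A : Fin N → Type}
    [∀ i, Fintype (S i)] [∀ i, DecidableEq (S i)] [∀ i, Fintype (A i)]
    [∀ i, Nonempty (S i)] [∀ i, Nonempty (A i)]
    (γ : ℝ) (hγ0 : 0 ≤ γ) (hγ1 : γ < 1)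
    (P : ∀ i, S i → A i → S i → ℝ)
    (hP : ∀ i si ai, P i si ai ∈ stdSimplex ℝ (S i))
    (ρ : ∀ i, S i → ℝ) (hρ : ∀ i, ρ i ∈ stdSimplex ℝ (S i))
    (i : Fin N)
    -- a function of the local states and actions of the agents other than i:
    (F : (∀ j : {j : Fin N // j ≠ i}, S j) → (∀ j : {j : Fin N // j ≠ i}, A j) → ℝ)
    (θ : ∀ j, S j → A j → ℝ) (hθ : feasibleL θ)
    (θi' : S i → A i → ℝ) (hθi' : ∀ si, θi' si ∈ stdSimplex ℝ (A i)) :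
    expDisc γ (jointP P) (jointPiL (Function.update θ i θi')) (jointRho ρ)
        (fun st b => F (fun j => st j.1) (fun j => b j.1))
      = expDisc γ (jointP P) (jointPiL θ) (jointRho ρ)
        (fun st b => F (fun j => st j.1) (fun j => b j.1)) := by
  classical
  have key : ∀ (η : ∀ j, S j → A j → ℝ),
      (∀ si, ∑ y, η i si y = 1) →
      (∀ j, j ≠ i → η j = θ j) → ∀ t : ℕ,
      (∑ s, ∑ a, stateDist (jointP P) (jointPiL η) (jointRho ρ) t s
          * jointPiL η s a * F (fun j => s j.1) (fun j => a j.1))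
        = ∑ s' : ∀ j : {j : Fin N // j ≠ i}, S j,
            ∑ a' : ∀ j : {j : Fin N // j ≠ i}, A j,
              (∏ j : {j : Fin N // j ≠ i},
                stateDist (P j.1) (θ j.1) (ρ j.1) t (s' j) * θ j.1 (s' j) (a' j))
                * F s' a' := by
    intro η hηi hagree t
    have hterm : ∀ (s : ∀ j, S j) (a : ∀ j, A j),
        stateDist (jointP P) (jointPiL η) (jointRho ρ) t s
          * jointPiL η s a * F (fun j => s j.1) (fun j => a j.1)
        = (∏ j, (stateDist (P j) (η j) (ρ j) t (s j) * η j (s j) (a j)))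
          * F (fun j => s j.1) (fun j => a j.1) := by
      intro s a
      rw [stateDist_factor]
      simp only [jointPiL, ← Finset.prod_mul_distrib]
    rw [Finset.sum_congr rfl fun s _ => Finset.sum_congr rfl fun a _ => hterm s a]
    rw [inner_sum_split i F (fun j x y => stateDist (P j) (η j) (ρ j) t x * η j x y)]
    have hmass : (∑ x, ∑ y, stateDist (P i) (η i) (ρ i) t x * η i x y) = 1 := by
      have h1 : ∀ x, (∑ y, stateDist (P i) (η i) (ρ i) t x * η i x y)
          = stateDist (P i) (η i) (ρ i) t x := fun x => by
        rw [← Finset.mul_sum, hηi x, mul_one]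
      rw [Finset.sum_congr rfl fun x _ => h1 x]
      exact stateDist_mass (P i) (fun s a => (hP i s a).2) (η i) hηi (ρ i) (hρ i).2 t
    rw [hmass, one_mul]
    refine Finset.sum_congr rfl fun s' _ => Finset.sum_congr rfl fun a' _ => ?_
    congr 1
    exact Finset.prod_congr rfl fun j _ => by rw [hagree j.1 j.2]
  unfold expDisc
  refine tsum_congr fun t => ?_
  congr 1
  rw [key (Function.update θ i θi')
      (fun si => by rw [Function.update_self]; exact (hθi' si).2)
      (fun j hj => Function.update_of_ne hj _ _) t,
    key θ (fun si => (hθ i si).2) (fun j _ => rfl) t]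
end
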